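/- arXiv:1504.07436 — 6 statements merged into one kernel-verified Lean document; each statement's English description precedes it below -/
import Mathlib

section
/- Let F be a cdf, let N be an F-net, and let ε > 0. Then there exists α > 0 such that ψ_{F,N}(G) ≤ φ_{F,α}(G) + ε for every cdf G. -/
open Filter Topology

/-- A cumulative distribution function: nondecreasing, right-continuous,
tending to 0 at -∞ and to 1 at +∞. -/
def IsCDF (F : ℝ → ℝ) : Prop :=
  Monotone F ∧ (∀ x : ℝ, ContinuousWithinAt F (Set.Ici x) x) ∧
    Tendsto F atBot (nhds 0) ∧ Tendsto F atTop (nhds 1)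

/-- φ_{F,α}(G) = sup_x max{F(x-α) - G(x), G(x) - F(x+α)}. -/
noncomputable def phi (F : ℝ → ℝ) (α : ℝ) (G : ℝ → ℝ) : ℝ :=
  ⨆ x : ℝ, max (F (x - α) - G x) (G x - F (x + α))

/-- ψ_{F,N}(G) = sup_{x ∈ N} |F(x) - G(x)| for a finite set N. -/
noncomputable def psi (F : ℝ → ℝ) (N : Finset ℝ) (G : ℝ → ℝ) : ℝ :=
  sSup ((fun x => |F x - G x|) '' N)

/-- The Lévy metric with parameter γ. -/
noncomputable def levy (γ : ℝ) (F G : ℝ → ℝ) : ℝ :=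
  sInf {α : ℝ | 0 < α ∧ ∀ x : ℝ, F (x - γ * α) - α ≤ G x ∧ G x ≤ F (x + γ * α) + α}

/-- The escape index χ_e(𝓓) = inf_{M>0} sup_{F ∈ 𝓓} max{F(-M), 1 - F(M)}. -/
noncomputable def chiE (D : Set (ℝ → ℝ)) : ℝ :=
  sInf ((fun M => sSup ((fun F => max (F (-M)) (1 - F M)) '' D)) '' (Set.Ioi (0 : ℝ)))

lemma cdf_nonneg {F : ℝ → ℝ} (hF : IsCDF F) (x : ℝ) : 0 ≤ F x :=
  le_of_tendsto hF.2.2.1 (Filter.eventually_atBot.2 ⟨x, fun _ hz => hF.1 hz⟩)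

lemma cdf_le_one {F : ℝ → ℝ} (hF : IsCDF F) (x : ℝ) : F x ≤ 1 :=
  ge_of_tendsto hF.2.2.2 (Filter.eventually_atTop.2 ⟨x, fun _ hz => hF.1 hz⟩)

lemma phi_bdd {F G : ℝ → ℝ} (hF : IsCDF F) (hG : IsCDF G) (α : ℝ) :
    BddAbove (Set.range fun x => max (F (x - α) - G x) (G x - F (x + α))) := by
  refine ⟨1, ?_⟩; rintro _ ⟨x, rfl⟩
  exact max_le (by linarith [cdf_le_one hF (x - α), cdf_nonneg hG x])
    (by linarith [cdf_le_one hG x, cdf_nonneg hF (x + α)])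

lemma phi_nonneg {F G : ℝ → ℝ} (hF : IsCDF F) (hG : IsCDF G) (α : ℝ) :
    0 ≤ phi F α G := by
  have hb := phi_bdd hF hG α
  have h1 : Tendsto (fun x : ℝ => F (x - α)) atBot (nhds 0) :=
    hF.2.2.1.comp (tendsto_atBot_add_const_right _ (-α) tendsto_id |>.congr (by
      intro x; simp [sub_eq_add_neg]))
  have h2 : Tendsto (fun x : ℝ => F (x + α)) atBot (nhds 0) :=
    hF.2.2.1.comp (tendsto_atBot_add_const_right _ α tendsto_id)
  have htend : Tendsto (fun x => max (F (x - α) - G x) (G x - F (x + α))) atBot (nhds 0) := by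
    have := (h1.sub hG.2.2.1).max (hG.2.2.1.sub h2)
    simpa using this
  exact le_of_tendsto htend (Filter.Eventually.of_forall fun x => le_ciSup hb x)

theorem psi_le_phi_add (F : ℝ → ℝ) (hF : IsCDF F) (N : Finset ℝ)
    (hN : ∀ x ∈ N, ContinuousAt F x) (ε : ℝ) (hε : 0 < ε) :
    ∃ α > 0, ∀ G : ℝ → ℝ, IsCDF G → psi F N G ≤ phi F α G + ε := by
  have hN' : ∀ x : ℝ, ∃ δ > 0, x ∈ N → ∀ y, |y - x| < δ → |F y - F x| < ε := by
    intro x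
    by_cases hx : x ∈ N
    · obtain ⟨δ, hδ, h⟩ := Metric.continuousAt_iff.1 (hN x hx) ε hε
      exact ⟨δ, hδ, fun _ y hy => h (by simpa [Real.dist_eq] using hy)⟩
    · exact ⟨1, one_pos, fun h => absurd h hx⟩
  choose δ hδpos hδ using hN'
  rcases N.eq_empty_or_nonempty with rfl | hne
  · refine ⟨1, one_pos, fun G hG => ?_⟩
    refine Real.sSup_le (fun y hy => absurd hy (by simp)) ?_ <;>
      linarith [phi_nonneg hF hG 1]
  · set α := N.inf' hne δ / 2 with hα
    have hinf : 0 < N.inf' hne δ := (Finset.lt_inf'_iff hne).2 fun x hx => hδpos x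
    have hαpos : 0 < α := by positivity
    have hαlt : ∀ x ∈ N, α < δ x := fun x hx =>
      lt_of_lt_of_le (by linarith) (Finset.inf'_le δ hx)
    refine ⟨α, hαpos, fun G hG => ?_⟩
    have hb := phi_bdd hF hG α
    have hφ := phi_nonneg hF hG α
    refine Real.sSup_le (fun y hy => ?_) (by linarith)
    obtain ⟨x, hx, rfl⟩ := hy
    have h1 : |F (x - α) - F x| < ε := by
      refine hδ x hx (x - α) ?_
      rw [show x - α - x = -α by ring, abs_neg, abs_of_pos hαpos]
      exact hαlt x hx
    have h2 : |F (x + α) - F x| < ε := by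
      refine hδ x hx (x + α) ?_
      rw [show x + α - x = α by ring, abs_of_pos hαpos]
      exact hαlt x hx
    have hle1 : F (x - α) - G x ≤ phi F α G :=
      le_trans (le_max_left _ _) (le_ciSup hb x)
    have hle2 : G x - F (x + α) ≤ phi F α G :=
      le_trans (le_max_right _ _) (le_ciSup hb x)
    obtain ⟨a1, a2⟩ := abs_lt.1 h1
    obtain ⟨b1, b2⟩ := abs_lt.1 h2
    exact abs_sub_le_iff.2 ⟨by linarith, by linarith⟩
end

section
/- Let F and G be cdfs and let α > 0 and θ > 0. If φ_{F,α}(G) > θ, then L_{α/θ}(F,G) ≥ θ. -/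
open Filter Topology

theorem levy_ge_of_phi_gt (F G : ℝ → ℝ) (hF : IsCDF F) (hG : IsCDF G)
    (α θ : ℝ) (hα : 0 < α) (hθ : 0 < θ)
    (h : θ < phi F α G) :
    θ ≤ levy (α / θ) F G := by
  have bd : ∀ (H : ℝ → ℝ), IsCDF H → ∀ x, 0 ≤ H x ∧ H x ≤ 1 := by
    intro H hH x
    constructor
    · exact le_of_tendsto hH.2.2.1 (eventually_atBot.2 ⟨x, fun y hy => hH.1 hy⟩)
    · exact ge_of_tendsto hH.2.2.2 (eventually_atTop.2 ⟨x, fun y hy => hH.1 hy⟩)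
  have hF0 := fun x => (bd F hF x).1
  have hF1 := fun x => (bd F hF x).2
  have hG0 := fun x => (bd G hG x).1
  have hG1 := fun x => (bd G hG x).2
  apply le_csInf
  · refine ⟨θ + 1, by positivity, fun x => ⟨?_, ?_⟩⟩
    · have := hF1 (x - α / θ * (θ + 1)); have := hG0 x; linarith
    · have := hF0 (x + α / θ * (θ + 1)); have := hG1 x; linarith
  · intro a ha
    by_contra hlt
    push_neg at hlt
    have hγa : α / θ * a ≤ α := by
      have h1 : α / θ * a ≤ α / θ * θ :=
        mul_le_mul_of_nonneg_left hlt.le (by positivity)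
      rwa [div_mul_cancel₀ α hθ.ne'] at h1
    have key : phi F α G ≤ a := by
      refine ciSup_le fun x => max_le ?_ ?_
      · have h1 := (ha.2 x).1
        have h2 : F (x - α) ≤ F (x - α / θ * a) := hF.1 (by linarith)
        linarith
      · have h1 := (ha.2 x).2
        have h2 : F (x + α / θ * a) ≤ F (x + α) := hF.1 (by linarith)
        linarith
    linarith
end

section
/- For every ε > 0 and every function α : 𝓕 → (0,∞), there exists a countable set 𝓒 ⊆ 𝓕 such that for every cdf F there is H ∈ 𝓒 with φ_{H,α(H)}(F) < ε. -/
open Filter Topology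

lemma grid_phi_bound (ε r : ℝ) (hε : 0 < ε) (hr : 0 < r)
    (q0 : ℝ) (n : ℕ) (H F : ℝ → ℝ) (hH : IsCDF H) (hF : IsCDF F)
    (a : ℝ) (hra : r ≤ a)
    (hclose : ∀ i : ℕ, i ≤ n → |F (q0 + i * r) - H (q0 + i * r)| ≤ ε / 3)
    (hlo : H q0 ≤ ε / 6) (hhi : 1 - ε / 6 ≤ H (q0 + n * r)) :
    phi H a F ≤ ε / 2 := by
  classical
  have ha : 0 < a := lt_of_lt_of_le hr hra
  have hHm := hH.1
  have hFm := hF.1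
  refine ciSup_le fun x => ?_
  refine max_le ?_ ?_
  · -- H (x - a) - F x ≤ ε/2
    by_cases hx0 : x < q0
    · have h1 : H (x - a) ≤ H q0 := hHm (by linarith)
      have h2 : 0 ≤ F x := cdf_nonneg hF x
      linarith
    · push_neg at hx0
      set P : ℕ → Prop := fun i => q0 + i * r ≤ x with hP
      have hP0 : P 0 := by
        show q0 + ((0 : ℕ) : ℝ) * r ≤ x
        push_cast
        linarith
      set i := Nat.findGreatest P n with hi
      have hPi : P i := Nat.findGreatest_spec (Nat.zero_le n) hP0
      have hin : i ≤ n := Nat.findGreatest_le n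
      by_cases hxa : x - a ≤ q0 + i * r
      · have h1 : H (x - a) ≤ H (q0 + i * r) := hHm hxa
        have h2 := abs_le.mp (hclose i hin)
        have h3 : F (q0 + i * r) ≤ F x := hFm hPi
        have h2' := h2.1
        linarith
      · push_neg at hxa
        have hieq : i = n := by
          by_contra hne
          have hlt : i < n := lt_of_le_of_ne hin hne
          have hng : ¬ P (i + 1) :=
            Nat.findGreatest_is_greatest (Nat.lt_succ_self i) hlt
          apply hng
          show q0 + ((i : ℕ) + 1 : ℕ) * r ≤ x
          push_cast
          linarith
        have hq : q0 + (n : ℝ) * r < x - a := by rw [← hieq]; exact hxa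
        have h2 := abs_le.mp (hclose n le_rfl)
        have h3 : F (q0 + n * r) ≤ F x := hFm (by linarith)
        have h4 : H (x - a) ≤ 1 := cdf_le_one hH _
        have h2' := h2.1
        linarith
  · -- F x - H (x + a) ≤ ε/2
    by_cases hxn : q0 + (n : ℝ) * r < x
    · have h1 : H (q0 + n * r) ≤ H (x + a) := hHm (by linarith)
      have h2 : F x ≤ 1 := cdf_le_one hF x
      linarith
    · push_neg at hxn
      set P : ℕ → Prop := fun i => x ≤ q0 + i * r with hP
      have hPn : P n := hxn
      have hex : ∃ i, P i := ⟨n, hPn⟩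
      set i := Nat.find hex with hi
      have hPi : P i := Nat.find_spec hex
      have hin : i ≤ n := Nat.find_le hPn
      by_cases hxa : q0 + i * r ≤ x + a
      · have h1 : F x ≤ F (q0 + i * r) := hFm hPi
        have h2 := abs_le.mp (hclose i hin)
        have h3 : H (q0 + i * r) ≤ H (x + a) := hHm hxa
        have h2' := h2.2
        linarith
      · push_neg at hxa
        rcases Nat.eq_zero_or_pos i with h0 | hpos
        · have hPi0 : x ≤ q0 + ((0 : ℕ) : ℝ) * r := by
            have h := hPi; rw [h0] at h; exact h
          push_cast at hPi0
          have h1 : F x ≤ F q0 := hFm (by linarith)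
          have h2 := abs_le.mp (hclose 0 (Nat.zero_le n))
          simp only [Nat.cast_zero, zero_mul, add_zero] at h2
          have h3 : 0 ≤ H (x + a) := cdf_nonneg hH _
          have h2' := h2.2
          linarith
        · obtain ⟨j, hj⟩ : ∃ j, i = j + 1 := ⟨i - 1, by omega⟩
          have hnj : ¬ P j := Nat.find_min hex (by omega)
          simp only [hP, not_le] at hnj
          have h5 : q0 + ((j : ℕ) + 1 : ℕ) * r ≤ x + a := by
            push_cast
            linarith
          rw [← hj] at h5
          exact absurd h5 (not_le.mpr hxa)

/-- An index is *good* if some CDF fits its grid data, with grid spacing at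
most its own `α`. -/
def GoodIdx (ε : ℝ) (α : (ℝ → ℝ) → ℝ) (p : ℚ × ℚ × List ℚ) : Prop :=
  ∃ H : ℝ → ℝ, IsCDF H ∧ ((p.2.1 : ℝ) ≤ α H) ∧
    (∀ i : ℕ, i < p.2.2.length →
      |H ((p.1 : ℝ) + i * (p.2.1 : ℝ)) - ((p.2.2.getD i 0 : ℚ) : ℝ)| ≤ ε / 6) ∧
    H (p.1 : ℝ) ≤ ε / 6 ∧
    1 - ε / 6 ≤ H ((p.1 : ℝ) + ((p.2.2.length - 1 : ℕ) : ℝ) * (p.2.1 : ℝ))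

theorem lindelof_phi (ε : ℝ) (hε : 0 < ε) (α : (ℝ → ℝ) → ℝ)
    (hα : ∀ F : ℝ → ℝ, IsCDF F → 0 < α F) :
    ∃ C : Set (ℝ → ℝ), C.Countable ∧ (∀ H ∈ C, IsCDF H) ∧
      ∀ F : ℝ → ℝ, IsCDF F → ∃ H ∈ C, phi H (α H) F < ε := by
  classical
  set f : ℚ × ℚ × List ℚ → (ℝ → ℝ) :=
    fun p => if h : GoodIdx ε α p then h.choose else 0 with hf
  refine ⟨f '' {p | GoodIdx ε α p}, (Set.to_countable _).image f, ?_, ?_⟩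
  · rintro H ⟨p, hp, rfl⟩
    have : f p = hp.choose := dif_pos hp
    rw [this]
    exact hp.choose_spec.1
  · intro F hFcdf
    -- pick rational spacing r with 0 < r < α F
    obtain ⟨rq, hrq0, hrqα⟩ := exists_rat_btwn (hα F hFcdf)
    have hrq0' : (0 : ℝ) < rq := by exact_mod_cast hrq0
    -- pick rational q0 with F q0 ≤ ε/6
    have hbot : ∀ᶠ x in atBot, F x < ε / 6 :=
      hFcdf.2.2.1.eventually (gt_mem_nhds (by linarith))
    obtain ⟨b, hb⟩ := eventually_atBot.mp hbot
    obtain ⟨q0, hq0b⟩ := exists_rat_lt b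
    have hq0 : F q0 < ε / 6 := hb q0 (le_of_lt hq0b)
    -- pick n with 1 - ε/6 < F (q0 + n r)
    have htop : ∀ᶠ x in atTop, 1 - ε / 6 < F x :=
      hFcdf.2.2.2.eventually (lt_mem_nhds (by linarith))
    obtain ⟨c, hc⟩ := eventually_atTop.mp htop
    obtain ⟨n, hn⟩ := exists_nat_ge ((c - q0) / rq)
    have hqn : 1 - ε / 6 < F ((q0 : ℝ) + n * rq) := by
      apply hc
      have : (c - q0) ≤ n * rq := by
        calc (c - (q0:ℝ)) = ((c - q0) / rq) * rq := by field_simp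
        _ ≤ n * rq := by
          apply mul_le_mul_of_nonneg_right hn (le_of_lt hrq0')
      linarith
    -- pick rational values near F on the grid
    have hv : ∀ j : ℕ, ∃ v : ℚ, |F ((q0 : ℝ) + j * rq) - (v : ℝ)| ≤ ε / 6 := by
      intro j
      obtain ⟨v, hv1, hv2⟩ := exists_rat_btwn
        (show F ((q0:ℝ) + j * rq) < F ((q0:ℝ) + j * rq) + ε / 6 by linarith)
      exact ⟨v, abs_le.2 ⟨by linarith, by linarith⟩⟩
    choose v hvspec using hv
    set l : List ℚ := List.ofFn (fun j : Fin (n + 1) => v j) with hl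
    have hllen : l.length = n + 1 := by simp [hl]
    have hlget : ∀ j : ℕ, j < n + 1 → l.getD j 0 = v j := by
      intro j hj
      rw [List.getD_eq_getElem l 0 (by omega)]
      simp only [hl, List.getElem_ofFn]
    set p : ℚ × ℚ × List ℚ := (q0, rq, l) with hpdef
    have hgood : GoodIdx ε α p := by
      refine ⟨F, hFcdf, le_of_lt hrqα, ?_, le_of_lt hq0, ?_⟩
      · intro i hi
        rw [hllen] at hi
        show |F ((q0:ℝ) + i * rq) - ((l.getD i 0 : ℚ) : ℝ)| ≤ ε / 6
        rw [hlget i hi]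
        exact hvspec i
      · show 1 - ε / 6 ≤ F ((q0:ℝ) + ((l.length - 1 : ℕ) : ℝ) * rq)
        rw [hllen]
        simp only [Nat.add_sub_cancel]
        linarith
    refine ⟨f p, ⟨p, hgood, rfl⟩, ?_⟩
    have hfp : f p = hgood.choose := dif_pos hgood
    obtain ⟨hHcdf, hrα, hHclose, hHlo, hHhi⟩ := hgood.choose_spec
    rw [hfp]
    set H := hgood.choose with hH
    have hbound : phi H (α H) F ≤ ε / 2 := by
      apply grid_phi_bound ε (rq : ℝ) hε hrq0' (q0 : ℝ) n H F hHcdf hFcdf (α H) hrα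
      · intro i hi
        have h1 := hHclose i (by rw [hllen]; omega)
        rw [hlget i (by omega)] at h1
        have h2 := hvspec i
        have h1' := abs_le.mp h1
        have h2' := abs_le.mp h2
        rw [abs_le]
        constructor <;> [linarith; linarith]
      · simpa using hHlo
      · have := hHhi
        rw [hllen] at this
        simpa using this
    linarith
end

section
/- Let 𝓓 ⊆ 𝓕 and r ≥ 0. Suppose that for every α > 0 there exists a finite set 𝓔 ⊆ 𝓕 such that for every F ∈ 𝓓 there is G ∈ 𝓔 with φ_{G,α}(F) ≤ r. Then χ_e(𝓓) ≤ r. -/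
open Filter Topology

lemma phi_bound {G F : ℝ → ℝ} (hG : IsCDF G) (hF : IsCDF F) (α : ℝ) (x : ℝ) :
    G (x - α) - F x ≤ phi G α F ∧ F x - G (x + α) ≤ phi G α F := by
  have hbdd : BddAbove (Set.range fun x : ℝ =>
      max (G (x - α) - F x) (F x - G (x + α))) := by
    refine ⟨1, Set.forall_mem_range.2 fun y => ?_⟩
    exact max_le (by linarith [cdf_le_one hG (y - α), cdf_nonneg hF y])
      (by linarith [cdf_le_one hF y, cdf_nonneg hG (y + α)])
  have := le_ciSup hbdd x
  exact ⟨le_trans (le_max_left _ _) this, le_trans (le_max_right _ _) this⟩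

theorem chiE_le_of_finite_phi_cover (D : Set (ℝ → ℝ)) (hDcdf : ∀ F ∈ D, IsCDF F)
    (r : ℝ) (hr : 0 ≤ r)
    (h : ∀ α > (0 : ℝ), ∃ E : Set (ℝ → ℝ), E.Finite ∧ (∀ G ∈ E, IsCDF G) ∧
      ∀ F ∈ D, ∃ G ∈ E, phi G α F ≤ r) :
    chiE D ≤ r := by
  refine le_of_forall_pos_le_add fun ε hε => ?_
  obtain ⟨E, hEfin, hEcdf, hcov⟩ := h 1 one_pos
  -- choose M large enough
  have hev : ∀ᶠ M : ℝ in atTop, (0 < M ∧ ∀ G ∈ E, G (-M + 1) ≤ ε ∧ 1 - G (M - 1) ≤ ε) := by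
    refine (eventually_gt_atTop 0).and (hEfin.eventually_all.2 fun G hG => ?_)
    have hG' := hEcdf G hG
    have h1 : Tendsto (fun M : ℝ => G (-M + 1)) atTop (nhds 0) :=
      hG'.2.2.1.comp (tendsto_atBot_add_const_right _ 1 tendsto_neg_atTop_atBot)
    have h2 : Tendsto (fun M : ℝ => 1 - G (M - 1)) atTop (nhds 0) := by
      have := hG'.2.2.2.comp (tendsto_atTop_add_const_right _ (-1) tendsto_id)
      have := (tendsto_const_nhds (x := (1:ℝ))).sub this
      simpa [sub_sub_cancel, sub_eq_add_neg] using this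
    filter_upwards [h1.eventually_le_const hε, h2.eventually_le_const hε] with M hM1 hM2
    exact ⟨hM1, by simpa using hM2⟩
  obtain ⟨M, hM0, hMε⟩ := hev.exists
  -- bound for each F ∈ D
  have key : ∀ F ∈ D, max (F (-M)) (1 - F M) ≤ r + ε := by
    intro F hF
    obtain ⟨G, hGE, hphi⟩ := hcov F hF
    have hGc := hEcdf G hGE
    have hFc := hDcdf F hF
    obtain ⟨hg1, hg2⟩ := hMε G hGE
    have hb1 := (phi_bound hGc hFc 1 (-M)).2
    have hb2 := (phi_bound hGc hFc 1 M).1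
    refine max_le ?_ ?_
    · have : (-M : ℝ) + 1 = -M + 1 := rfl
      calc F (-M) ≤ G (-M + 1) + phi G 1 F := by linarith
        _ ≤ r + ε := by linarith
    · calc 1 - F M ≤ 1 - G (M - 1) + phi G 1 F := by linarith
        _ ≤ r + ε := by linarith
  -- now the inf ≤ value at M
  have hSnonneg : ∀ M' : ℝ, 0 ≤ ⨆ F ∈ D, max (F (-M')) (1 - F M') := by
    intro M'
    refine Real.iSup_nonneg fun F => Real.iSup_nonneg fun hF => ?_
    exact le_trans (cdf_nonneg (hDcdf F hF) (-M')) (le_max_left _ _)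
  have step1 : chiE D ≤ ⨅ (_ : M ∈ Set.Ioi (0:ℝ)), ⨆ F ∈ D, max (F (-M)) (1 - F M) :=
    by
    rw [ciInf_pos (show M ∈ Set.Ioi (0:ℝ) from hM0)]
    unfold chiE
    refine (csInf_le (s := (fun M => sSup ((fun F => max (F (-M)) (1 - F M)) '' D)) '' (Set.Ioi (0 : ℝ)))
      ⟨0, ?_⟩ ⟨M, hM0, rfl⟩).trans ?_
    · rintro _ ⟨M', -, rfl⟩
      beta_reduce
      rcases D.eq_empty_or_nonempty with hD | hD
      · subst hD
        rw [Set.image_empty, Real.sSup_empty]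
      · obtain ⟨F, hF⟩ := hD
        refine le_trans (le_trans (cdf_nonneg (hDcdf F hF) (-M')) (le_max_left _ _))
          (le_csSup ⟨1, ?_⟩ ⟨F, hF, rfl⟩)
        rintro _ ⟨G, hG, rfl⟩
        exact max_le (cdf_le_one (hDcdf G hG) _) (by linarith [cdf_nonneg (hDcdf G hG) M'])
    · show sSup ((fun F => max (F (-M)) (1 - F M)) '' D) ≤ _
      rcases D.eq_empty_or_nonempty with hD | hD
      · subst hD
        rw [Set.image_empty, Real.sSup_empty]
        exact hSnonneg M
      · refine csSup_le (hD.image _) ?_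
        rintro _ ⟨F, hF, rfl⟩
        refine le_ciSup_of_le ⟨1, Set.forall_mem_range.2 fun G => ?_⟩ F ?_
        · exact Real.iSup_le (fun hG => max_le (cdf_le_one (hDcdf G hG) _)
            (by linarith [cdf_nonneg (hDcdf G hG) M])) zero_le_one
        · rw [ciSup_pos hF]
  rw [ciInf_pos (show M ∈ Set.Ioi (0:ℝ) from hM0)] at step1
  refine step1.trans ?_
  refine Real.iSup_le (fun F => Real.iSup_le (fun hF => key F hF) (by linarith)) (by linarith)
end

section
/- Let M > 0, c ≥ 0, let (F_n)_n be a sequence of cdfs with F_n(−M) ≤ c and 1 − F_n(M) ≤ c for all n, and let G̃ be a cdf with G̃(x) = 0 for x < −M and G̃(x) = 1 for x ≥ M, such that F_n(x) → G̃(x) at every continuity point x of G̃ with −M < x < M. Then for every α > 0, limsup_n φ_{G̃,α}(F_n) ≤ c. -/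
open Filter Topology

lemma IsCDF.nonneg' {F : ℝ → ℝ} (h : IsCDF F) (x : ℝ) : 0 ≤ F x :=
  le_of_tendsto h.2.2.1 (eventually_atBot.2 ⟨x, fun _ hy => h.1 hy⟩)

lemma IsCDF.le_one' {F : ℝ → ℝ} (h : IsCDF F) (x : ℝ) : F x ≤ 1 :=
  ge_of_tendsto h.2.2.2 (eventually_atTop.2 ⟨x, fun _ hy => h.1 hy⟩)

theorem limsup_phi_le_of_weak_conv (M c : ℝ) (hM : 0 < M) (hc : 0 ≤ c)
    (F : ℕ → ℝ → ℝ) (hF : ∀ n, IsCDF (F n))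
    (hFM : ∀ n, F n (-M) ≤ c ∧ 1 - F n M ≤ c)
    (G : ℝ → ℝ) (hG : IsCDF G)
    (hG0 : ∀ x : ℝ, x < -M → G x = 0) (hG1 : ∀ x : ℝ, M ≤ x → G x = 1)
    (hconv : ∀ x : ℝ, -M < x → x < M → ContinuousAt G x →
      Tendsto (fun n => F n x) atTop (nhds (G x))) :
    ∀ α > (0 : ℝ), Filter.limsup (fun n => phi G α (F n)) atTop ≤ c := by
  classical
  intro α hα
  have hF0 : ∀ n x, 0 ≤ F n x := fun n x => (hF n).nonneg' x
  have hF1 : ∀ n x, F n x ≤ 1 := fun n x => (hF n).le_one' x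
  have hG0' : ∀ x, 0 ≤ G x := fun x => hG.nonneg' x
  have hG1' : ∀ x, G x ≤ 1 := fun x => hG.le_one' x
  have hGm : Monotone G := hG.1
  -- the grid
  set K : ℕ := ⌈4 * M / α⌉₊ with hKdef
  have hK1 : 4 * M / α ≤ (K : ℝ) := Nat.le_ceil _
  set h0 : ℝ := 2 * M / (K + 1) with hh0def
  have hKpos : (0 : ℝ) < (K : ℝ) + 1 := by positivity
  have hh0 : 0 < h0 := by positivity
  have hh2 : 2 * h0 < α := by
    have h1 : 4 * M ≤ α * (K : ℝ) := by
      rw [div_le_iff₀ hα] at hK1; linarith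
    have h2 : 2 * h0 = 4 * M / ((K : ℝ) + 1) := by rw [hh0def]; ring
    rw [h2, div_lt_iff₀ hKpos]
    nlinarith
  have hh0α : h0 < α := by linarith
  -- choose continuity points in each subinterval
  have hD : Dense {x : ℝ | ContinuousAt G x} := by
    have := (hGm.countable_not_continuousAt).dense_compl ℝ
    simpa [Set.compl_setOf, Classical.not_not] using this
  have hex : ∀ i : ℕ, ∃ y, ContinuousAt G y ∧
      y ∈ Set.Ioo (-M + i * h0) (-M + (i + 1) * h0) := by
    intro i
    refine hD.exists_mem_open isOpen_Ioo (Set.nonempty_Ioo.2 ?_)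
    have : (i : ℝ) * h0 < (i + 1) * h0 := by nlinarith
    linarith
  choose t htc htm using hex
  have tlb : ∀ i : ℕ, -M + i * h0 < t i := fun i => (htm i).1
  have tub : ∀ i : ℕ, t i < -M + (i + 1) * h0 := fun i => (htm i).2
  have hKh : (-M) + ((K : ℝ) + 1) * h0 = M := by
    have h' : ((K : ℝ) + 1) * h0 = 2 * M := by rw [hh0def]; field_simp
    linarith
  have tmem : ∀ i ≤ K, -M < t i ∧ t i < M := by
    intro i hi
    constructor
    · have : (0 : ℝ) ≤ (i : ℝ) * h0 := by positivity
      linarith [tlb i]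
    · have hi' : ((i : ℝ) + 1) ≤ (K : ℝ) + 1 := by
        have : (i : ℝ) ≤ (K : ℝ) := by exact_mod_cast hi
        linarith
      have : ((i : ℝ) + 1) * h0 ≤ ((K : ℝ) + 1) * h0 := by nlinarith
      have := tub i
      linarith [hKh]
  have tgap : ∀ i : ℕ, t (i + 1) < t i + α := by
    intro i
    have h1 := tub (i + 1)
    have h2 := tlb i
    have : ((i : ℝ) + 1 + 1) * h0 = (i : ℝ) * h0 + 2 * h0 := by push_cast; ring
    push_cast at h1
    linarith
  have t0ub : t 0 < -M + h0 := by have := tub 0; push_cast at this; linarith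
  have tKlb : M - h0 < t K := by
    have h1 := tlb K
    have h3 : ((K : ℝ) + 1) * h0 = (K : ℝ) * h0 + h0 := by ring
    linarith [hKh]
  -- the key eventual bound
  have key : ∀ ε > (0 : ℝ), ∀ᶠ n in atTop, phi G α (F n) ≤ c + ε := by
    intro ε hε
    have hclose : ∀ᶠ n in atTop, ∀ i ∈ Finset.range (K + 1),
        |F n (t i) - G (t i)| ≤ ε := by
      rw [eventually_all_finset]
      intro i hi
      have hi' : i ≤ K := Nat.lt_succ_iff.1 (Finset.mem_range.1 hi)
      have htend := hconv (t i) (tmem i hi').1 (tmem i hi').2 (htc i)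
      exact (htend.eventually (eventually_abs_sub_lt (G (t i)) hε)).mono
        fun n hn => le_of_lt hn
    refine hclose.mono fun n hn => ?_
    have hn' : ∀ i ≤ K, |F n (t i) - G (t i)| ≤ ε := fun i hi =>
      hn i (Finset.mem_range.2 (Nat.lt_succ_iff.2 hi))
    refine ciSup_le fun x => ?_
    refine max_le ?_ ?_
    · -- G (x - α) - F n x ≤ c + ε
      by_cases hx1 : x < t 0
      · have : x - α < -M := by linarith
        rw [hG0 _ this]
        linarith [hF0 n x]
      · by_cases hx2 : t K < x - α
        · have hxM : M < x := by linarith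
          have h1 : F n M ≤ F n x := (hF n).1 hxM.le
          have h2 : G (x - α) ≤ 1 := hG1' _
          linarith [(hFM n).2]
        · push_neg at hx1 hx2
          have hjK : Nat.findGreatest (fun i => t i ≤ x) K ≤ K :=
            Nat.findGreatest_le K
          have hj1 : t (Nat.findGreatest (fun i => t i ≤ x) K) ≤ x :=
            Nat.findGreatest_spec (P := fun i => t i ≤ x) (Nat.zero_le K) hx1
          have hgr : ∀ m, Nat.findGreatest (fun i => t i ≤ x) K < m → m ≤ K → ¬ t m ≤ x :=
            fun m h1 h2 => Nat.findGreatest_is_greatest (P := fun i => t i ≤ x) h1 h2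
          set j := Nat.findGreatest (fun i => t i ≤ x) K with hjdef
          have hj2 : x - α ≤ t j := by
            rcases eq_or_lt_of_le hjK with h | h
            · rw [h]; exact hx2
            · have h4 := hgr (j + 1) (Nat.lt_succ_self j) (Nat.succ_le_of_lt h)
              push_neg at h4
              have := tgap j
              linarith
          have h1 : G (x - α) ≤ G (t j) := hGm hj2
          have h2 : F n (t j) ≤ F n x := (hF n).1 hj1
          have h3 : G (t j) - F n (t j) ≤ ε := by
            have := hn' j hjK
            have := abs_le.1 this
            linarith [this.1]
          linarith
    · -- F n x - G (x + α) ≤ c + ε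
      by_cases hx1 : M ≤ x + α
      · rw [hG1 _ hx1]
        linarith [hF1 n x]
      · by_cases hx2 : x ≤ -M
        · have h1 : F n x ≤ F n (-M) := (hF n).1 hx2
          linarith [(hFM n).1, hG0' (x + α)]
        · push_neg at hx1 hx2
          have hxtK : x ≤ t K := by linarith
          have hexj : ∃ i, x ≤ t i := ⟨K, hxtK⟩
          have hj1 : x ≤ t (Nat.find hexj) := Nat.find_spec hexj
          have hjK : Nat.find hexj ≤ K := Nat.find_le hxtK
          have hmin : ∀ m, m < Nat.find hexj → ¬ x ≤ t m :=
            fun m hm => Nat.find_min hexj hm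
          set j := Nat.find hexj with hjdef
          have hj2 : t j ≤ x + α := by
            rcases Nat.eq_zero_or_pos j with h | h
            · rw [h]; linarith
            · obtain ⟨m, hm⟩ := Nat.exists_eq_succ_of_ne_zero (Nat.pos_iff_ne_zero.1 h)
              have hmlt : m < j := by omega
              have h4 := hmin m hmlt
              push_neg at h4
              have := tgap m
              rw [hm]
              linarith
          have h1 : F n x ≤ F n (t j) := (hF n).1 hj1
          have h2 : G (t j) ≤ G (x + α) := hGm hj2
          have h3 : F n (t j) - G (t j) ≤ ε := by
            have := abs_le.1 (hn' j hjK)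
            linarith [this.2]
          linarith
  -- nonnegativity of phi for coboundedness
  have hphi0 : ∀ n, 0 ≤ phi G α (F n) := by
    intro n
    have hbdd : BddAbove (Set.range fun x =>
        max (G (x - α) - F n x) (F n x - G (x + α))) := by
      refine ⟨1, ?_⟩
      rintro _ ⟨x, rfl⟩
      exact max_le (by linarith [hG1' (x - α), hF0 n x])
        (by linarith [hF1 n x, hG0' (x + α)])
    have hle := le_ciSup hbdd (M + α)
    have hMα : G (M + α - α) = 1 := by
      rw [show M + α - α = M by ring]; exact hG1 M le_rfl
    have : (0 : ℝ) ≤ max (G (M + α - α) - F n (M + α)) (F n (M + α) - G (M + α + α)) := by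
      refine le_trans ?_ (le_max_left _ _)
      rw [hMα]; linarith [hF1 n (M + α)]
    exact le_trans this hle
  have hcob : IsCoboundedUnder (· ≤ ·) atTop (fun n => phi G α (F n)) :=
    isCoboundedUnder_le_of_le atTop hphi0
  refine le_of_not_gt fun hlt => ?_
  set L := limsup (fun n => phi G α (F n)) atTop with hL
  have hε : 0 < (L - c) / 2 := by linarith
  have := Filter.limsup_le_of_le hcob (key _ hε)
  rw [← hL] at this
  linarith
end

section
/- (Sequential form of Bergström's theorem.) Let (F_n)_n be a sequence of cdfs and F a cdf. Then F_n(x) → F(x) at every continuity point x of F if and only if for every continuous cdf G one has sup_{x ∈ ℝ} |(F_n ⋆ G)(x) − (F ⋆ G)(x)| → 0 as n → ∞. -/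
open Filter Topology

open MeasureTheory in
/-- The convolution (F ⋆ G)(x) = ∫ F(x - y) dG(y), the integral being taken
against the Lebesgue–Stieltjes measure associated to the cdf G. -/
noncomputable def convCDF (F G : ℝ → ℝ) (hG : IsCDF G) : ℝ → ℝ :=
  fun x => ∫ y, F (x - y) ∂((⟨G, hG.1, hG.2.1⟩ : StieltjesFunction ℝ).measure)


lemma IsCDF.nonneg {f : ℝ → ℝ} (hf : IsCDF f) (x : ℝ) : 0 ≤ f x :=
  le_of_tendsto hf.2.2.1 (Filter.eventually_atBot.2 ⟨x, fun y hy => hf.1 hy⟩)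

lemma IsCDF.le_one {f : ℝ → ℝ} (hf : IsCDF f) (x : ℝ) : f x ≤ 1 :=
  ge_of_tendsto hf.2.2.2 (Filter.eventually_atTop.2 ⟨x, fun y hy => hf.1 hy⟩)

open MeasureTheory

lemma cdf_integrable {K : ℝ → ℝ} (hK : IsCDF K) (μ : Measure ℝ) [IsFiniteMeasure μ]
    (x : ℝ) : Integrable (fun y => K (x - y)) μ := by
  refine ⟨((hK.1.measurable).comp (measurable_const.sub measurable_id)).aestronglyMeasurable, ?_⟩
  refine HasFiniteIntegral.of_bounded (C := 1) ?_
  filter_upwards with y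
  rw [Real.norm_eq_abs, abs_le]
  exact ⟨by linarith [hK.nonneg (x - y)], hK.le_one _⟩

lemma stj_prob {H : ℝ → ℝ} (hH : IsCDF H) :
    IsProbabilityMeasure ((⟨H, hH.1, hH.2.1⟩ : StieltjesFunction ℝ).measure) :=
  StieltjesFunction.isProbabilityMeasure _ hH.2.2.1 hH.2.2.2

lemma convCDF_mono {K H : ℝ → ℝ} (hK : IsCDF K) (hH : IsCDF H) :
    Monotone (convCDF K H hH) := by
  have := stj_prob hH
  intro x x' hxx'
  exact integral_mono (cdf_integrable hK _ x) (cdf_integrable hK _ x')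
    (fun y => hK.1 (by linarith))

lemma convCDF_nonneg {K H : ℝ → ℝ} (hK : IsCDF K) (hH : IsCDF H) (x : ℝ) :
    0 ≤ convCDF K H hH x := by
  have := stj_prob hH
  exact integral_nonneg fun y => hK.nonneg _

lemma convCDF_le_one {K H : ℝ → ℝ} (hK : IsCDF K) (hH : IsCDF H) (x : ℝ) :
    convCDF K H hH x ≤ 1 := by
  have := stj_prob hH
  calc convCDF K H hH x ≤ ∫ _, (1:ℝ) ∂((⟨H, hH.1, hH.2.1⟩ : StieltjesFunction ℝ).measure) :=
        integral_mono (cdf_integrable hK _ x) (integrable_const 1) (fun y => hK.le_one _)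
    _ = 1 := by simp

lemma noAtoms_of_continuous {H : ℝ → ℝ} (hH : IsCDF H) (hc : Continuous H) :
    NullSingletonClass ((⟨H, hH.1, hH.2.1⟩ : StieltjesFunction ℝ).measure) := by
  constructor
  intro x
  rw [StieltjesFunction.measure_singleton]
  have : Function.leftLim H x = H x :=
    leftLim_eq_of_tendsto
      (hc.continuousAt.continuousWithinAt)
  simp [this]

lemma ae_continuousAt {K : ℝ → ℝ} (hK : Monotone K) (μ : Measure ℝ) [NullSingletonClass μ] (x : ℝ) :
    ∀ᵐ y ∂μ, ContinuousAt K (x - y) := by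
  rw [MeasureTheory.ae_iff]
  refine measure_mono_null (fun y hy => ?_)
    ((hK.countable_not_continuousAt.image (fun t => x - t)).measure_zero μ)
  exact ⟨x - y, hy, by ring⟩

lemma convCDF_continuous {K H : ℝ → ℝ} (hK : IsCDF K) (hH : IsCDF H) (hc : Continuous H) :
    Continuous (convCDF K H hH) := by
  have := stj_prob hH
  have := noAtoms_of_continuous hH hc
  rw [continuous_iff_continuousAt]
  intro x₀
  refine continuousAt_of_dominated (bound := fun _ => 1)
    (Filter.Eventually.of_forall fun x =>
      ((hK.1.measurable).comp (measurable_const.sub measurable_id)).aestronglyMeasurable)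
    (Filter.Eventually.of_forall fun x => Filter.Eventually.of_forall fun y => by
      show ‖K (x - y)‖ ≤ 1
      rw [Real.norm_eq_abs, abs_le]
      exact ⟨by linarith [hK.nonneg (x - y)], hK.le_one _⟩)
    (integrable_const 1) ?_
  filter_upwards [ae_continuousAt hK.1 _ x₀] with y hy
  have h2 : ContinuousAt (fun x : ℝ => x - y) x₀ := (continuous_id.sub continuous_const).continuousAt
  exact ContinuousAt.comp hy h2

lemma convCDF_atBot {K H : ℝ → ℝ} (hK : IsCDF K) (hH : IsCDF H) :
    Tendsto (convCDF K H hH) atBot (𝓝 0) := by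
  have := stj_prob hH
  have h0 : (0:ℝ) = ∫ _, (0:ℝ) ∂((⟨H, hH.1, hH.2.1⟩ : StieltjesFunction ℝ).measure) := by simp
  rw [h0]
  refine tendsto_integral_filter_of_dominated_convergence (bound := fun _ => 1)
    (Filter.Eventually.of_forall fun x =>
      ((hK.1.measurable).comp (measurable_const.sub measurable_id)).aestronglyMeasurable)
    (Filter.Eventually.of_forall fun x => Filter.Eventually.of_forall fun y => by
      show ‖K (x - y)‖ ≤ 1
      rw [Real.norm_eq_abs, abs_le]
      exact ⟨by linarith [hK.nonneg (x - y)], hK.le_one _⟩)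
    (integrable_const 1) ?_
  refine Filter.Eventually.of_forall fun y => hK.2.2.1.comp ?_
  exact tendsto_atBot_add_const_right atBot (-y) tendsto_id |>.congr fun x => by simp only [id_eq]; ring

lemma convCDF_atTop {K H : ℝ → ℝ} (hK : IsCDF K) (hH : IsCDF H) :
    Tendsto (convCDF K H hH) atTop (𝓝 1) := by
  have := stj_prob hH
  have h0 : (1:ℝ) = ∫ _, (1:ℝ) ∂((⟨H, hH.1, hH.2.1⟩ : StieltjesFunction ℝ).measure) := by simp
  rw [h0]
  refine tendsto_integral_filter_of_dominated_convergence (bound := fun _ => 1)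
    (Filter.Eventually.of_forall fun x =>
      ((hK.1.measurable).comp (measurable_const.sub measurable_id)).aestronglyMeasurable)
    (Filter.Eventually.of_forall fun x => Filter.Eventually.of_forall fun y => by
      show ‖K (x - y)‖ ≤ 1
      rw [Real.norm_eq_abs, abs_le]
      exact ⟨by linarith [hK.nonneg (x - y)], hK.le_one _⟩)
    (integrable_const 1) ?_
  refine Filter.Eventually.of_forall fun y => hK.2.2.2.comp ?_
  exact tendsto_atTop_add_const_right atTop (-y) tendsto_id |>.congr fun x => by simp only [id_eq]; ring

lemma convCDF_tendsto_pt {F : ℕ → ℝ → ℝ} (hF : ∀ n, IsCDF (F n)) {G H : ℝ → ℝ}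
    (hG : IsCDF G) (hH : IsCDF H) (hc : Continuous H)
    (hconv : ∀ x : ℝ, ContinuousAt G x → Tendsto (fun n => F n x) atTop (𝓝 (G x))) (x : ℝ) :
    Tendsto (fun n => convCDF (F n) H hH x) atTop (𝓝 (convCDF G H hH x)) := by
  have := stj_prob hH
  have := noAtoms_of_continuous hH hc
  refine tendsto_integral_of_dominated_convergence (bound := fun _ => 1)
    (fun n => (((hF n).1.measurable).comp (measurable_const.sub measurable_id)).aestronglyMeasurable)
    (integrable_const 1)
    (fun n => Filter.Eventually.of_forall fun y => by
      show ‖F n (x - y)‖ ≤ 1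
      rw [Real.norm_eq_abs, abs_le]
      exact ⟨by linarith [(hF n).nonneg (x - y)], (hF n).le_one _⟩) ?_
  filter_upwards [ae_continuousAt hG.1 _ x] with y hy
  exact hconv _ hy

lemma polya_bound {Fn C : ℝ → ℝ} {k : ℕ} {X : ℕ → ℝ} {d : ℝ}
    (hmono : Monotone Fn) (h0 : ∀ x, 0 ≤ Fn x) (h1 : ∀ x, Fn x ≤ 1)
    (hCmono : Monotone C) (hC0 : ∀ x, 0 ≤ C x) (hC1 : ∀ x, C x ≤ 1)
    (hk : 2 ≤ k)
    (hX : ∀ i, 1 ≤ i → i ≤ k - 1 → C (X i) = (i : ℝ) / k)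
    (hd : ∀ i, 1 ≤ i → i ≤ k - 1 → |Fn (X i) - C (X i)| ≤ d) (hd0 : 0 ≤ d) (x : ℝ) :
    |Fn x - C x| ≤ d + 1 / k := by
  classical
  have hkpos : (0:ℝ) < k := by
    have : (2:ℝ) ≤ k := by exact_mod_cast hk
    linarith
  have hk1 : 1 ≤ k - 1 := by omega
  rw [abs_le]
  by_cases hx1 : X 1 ≤ x
  · by_cases hxm : X (k - 1) ≤ x
    · -- top case
      have hCv : C (X (k-1)) = ((k:ℝ) - 1) / k := by
        rw [hX (k-1) hk1 le_rfl]
        congr 1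
        push_cast [Nat.cast_sub (by omega : 1 ≤ k)]
        ring
      have hA : C (X (k-1)) ≤ C x := hCmono hxm
      have hB : Fn (X (k-1)) ≤ Fn x := hmono hxm
      have habs := abs_le.1 (hd (k-1) hk1 le_rfl)
      have harith : ((k:ℝ) - 1) / k = 1 - 1/k := by field_simp
      constructor <;> [skip; skip] <;>
        (try (nlinarith [h1 x, hC1 x, h0 x, hC0 x])) <;>
        nlinarith [h1 x, hC1 x, h0 x, hC0 x, habs.1, habs.2, hCv, hA, hB, harith]
    · -- middle case
      push_neg at hxm
      set i := Nat.findGreatest (fun j => X j ≤ x) (k - 1) with hidef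
      have hi1 : 1 ≤ i := Nat.le_findGreatest hk1 hx1
      have him : i ≤ k - 1 := Nat.findGreatest_le _
      have hiP : X i ≤ x := by
        have h := Nat.findGreatest_spec (P := fun j => X j ≤ x) hk1 hx1
        simpa [hidef] using h
      have hine : i ≠ k - 1 := by
        intro h
        rw [h] at hiP
        linarith
      have hilt : i + 1 ≤ k - 1 := by omega
      have hnot : ¬ X (i+1) ≤ x := by
        have h := Nat.findGreatest_is_greatest (P := fun j => X j ≤ x)
          (by omega : Nat.findGreatest (fun j => X j ≤ x) (k-1) < i + 1) hilt
        simpa using h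
      push_neg at hnot
      have hCi : C (X i) = (i:ℝ)/k := hX i hi1 him
      have hCi1 : C (X (i+1)) = ((i:ℝ)+1)/k := by
        rw [hX (i+1) (by omega) hilt]; push_cast; ring_nf
      have hA1 : C (X i) ≤ C x := hCmono hiP
      have hA2 : C x ≤ C (X (i+1)) := hCmono hnot.le
      have hB1 : Fn (X i) ≤ Fn x := hmono hiP
      have hB2 : Fn x ≤ Fn (X (i+1)) := hmono hnot.le
      have ha1 := abs_le.1 (hd i hi1 him)
      have ha2 := abs_le.1 (hd (i+1) (by omega) hilt)
      have harith : ((i:ℝ)+1)/k = (i:ℝ)/k + 1/k := by field_simp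
      constructor <;> nlinarith [ha1.1, ha1.2, ha2.1, ha2.2]
  · -- bottom case
    push_neg at hx1
    have hCv : C (X 1) = 1 / k := by rw [hX 1 le_rfl hk1]; norm_num
    have hA : C x ≤ C (X 1) := hCmono hx1.le
    have hB : Fn x ≤ Fn (X 1) := hmono hx1.le
    have habs := abs_le.1 (hd 1 le_rfl hk1)
    constructor <;> nlinarith [h0 x, hC0 x, habs.1, habs.2]

lemma polya {Fn : ℕ → ℝ → ℝ} {C : ℝ → ℝ}
    (hmono : ∀ n, Monotone (Fn n)) (h0 : ∀ n x, 0 ≤ Fn n x) (h1 : ∀ n x, Fn n x ≤ 1)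
    (hCmono : Monotone C) (hCcont : Continuous C) (hC0 : ∀ x, 0 ≤ C x) (hC1 : ∀ x, C x ≤ 1)
    (hCbot : Tendsto C atBot (𝓝 0)) (hCtop : Tendsto C atTop (𝓝 1))
    (hpt : ∀ x, Tendsto (fun n => Fn n x) atTop (𝓝 (C x))) :
    Tendsto (fun n => ⨆ x, |Fn n x - C x|) atTop (𝓝 0) := by
  have hbdd : ∀ n, BddAbove (Set.range fun x => |Fn n x - C x|) := by
    intro n
    refine ⟨1, ?_⟩
    rintro _ ⟨x, rfl⟩
    rw [abs_le]
    constructor <;> nlinarith [h0 n x, h1 n x, hC0 x, hC1 x]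
  have hsup0 : ∀ n, 0 ≤ ⨆ x, |Fn n x - C x| := fun n =>
    le_trans (abs_nonneg _) (le_ciSup (hbdd n) 0)
  rw [Metric.tendsto_atTop]
  intro ε hε
  obtain ⟨k, hk⟩ := exists_nat_gt (2 / ε + 2)
  have hεk : 2 / ε < (k:ℝ) := by linarith [div_pos (by norm_num : (0:ℝ) < 2) hε]
  have hk2 : 2 ≤ k := by
    have hpos : (0:ℝ) < 2/ε := by positivity
    have h2 : (2:ℝ) < k := by linarith
    exact_mod_cast h2.le
  have hkpos : (0:ℝ) < k := by
    have : (2:ℝ) ≤ k := by exact_mod_cast hk2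
    linarith
  have h1k : 1 / (k:ℝ) < ε / 2 := by
    rw [div_lt_iff₀ hkpos]
    rw [div_lt_iff₀ hε] at hεk
    linarith
  have hk1 : 1 ≤ k - 1 := by omega
  -- choose endpoints
  obtain ⟨a, ha⟩ := (hCbot.eventually (gt_mem_nhds (show (0:ℝ) < 1/k by positivity))).exists
  obtain ⟨b, hb⟩ := (hCtop.eventually (lt_mem_nhds (show ((k:ℝ)-1)/k < 1 by
    rw [div_lt_one hkpos]; linarith))).exists
  have h1km : (1:ℝ)/k ≤ ((k:ℝ)-1)/k := by
    have : (2:ℝ) ≤ k := by exact_mod_cast hk2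
    gcongr
    linarith
  have hab : a ≤ b := by
    by_contra hcon
    push_neg at hcon
    have := hCmono hcon.le
    linarith
  -- choose grid points
  have hxex : ∀ i : ℕ, ∃ t, (1 ≤ i → i ≤ k - 1 → C t = (i:ℝ) / k) := by
    intro i
    by_cases hi : 1 ≤ i ∧ i ≤ k - 1
    · have hmem : (i:ℝ)/k ∈ Set.Icc (C a) (C b) := by
        constructor
        · refine ha.le.trans ?_
          gcongr
          exact_mod_cast hi.1
        · refine le_trans ?_ hb.le
          have hle : (i:ℝ) ≤ ((k:ℝ) - 1) := by
            have h' : (i:ℝ) ≤ ((k-1 : ℕ):ℝ) := by exact_mod_cast hi.2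
            rwa [Nat.cast_sub (by omega), Nat.cast_one] at h'
          gcongr
      obtain ⟨t, _, ht⟩ := intermediate_value_Icc hab hCcont.continuousOn hmem
      exact ⟨t, fun _ _ => ht⟩
    · exact ⟨0, fun hh1 hh2 => absurd ⟨hh1, hh2⟩ hi⟩
  choose X hX using hxex
  -- eventual closeness on the grid
  have hev : ∀ᶠ n in atTop, ∀ i ∈ Set.Icc 1 (k-1), |Fn n (X i) - C (X i)| < ε/2 := by
    rw [eventually_all_finite (Set.finite_Icc 1 (k-1))]
    intro i _
    have habs : Tendsto (fun n => |Fn n (X i) - C (X i)|) atTop (𝓝 0) := by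
      have h := (hpt (X i)).sub_const (C (X i))
      rw [sub_self] at h
      simpa using h.abs
    exact habs.eventually (gt_mem_nhds (half_pos hε))
  obtain ⟨N, hN⟩ := eventually_atTop.1 hev
  refine ⟨N, fun n hn => ?_⟩
  rw [Real.dist_eq, sub_zero, abs_of_nonneg (hsup0 n)]
  have hsup : (⨆ x, |Fn n x - C x|) ≤ ε/2 + 1/k := by
    refine ciSup_le fun x => ?_
    exact polya_bound (hmono n) (h0 n) (h1 n) hCmono hC0 hC1 hk2 hX
      (fun i hi1 hi2 => (hN n hn i ⟨hi1, hi2⟩).le) (by linarith) x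
  linarith

noncomputable def unifCDF (δ : ℝ) : ℝ → ℝ := fun t => max 0 (min 1 (t / δ))

lemma unifCDF_cont (δ : ℝ) : Continuous (unifCDF δ) :=
  continuous_const.max (continuous_const.min (continuous_id.div_const δ))

lemma unifCDF_isCDF {δ : ℝ} (hδ : 0 < δ) : IsCDF (unifCDF δ) := by
  refine ⟨?_, fun x => (unifCDF_cont δ).continuousAt.continuousWithinAt, ?_, ?_⟩
  · intro a b hab
    unfold unifCDF
    gcongr
  · refine Tendsto.congr' ?_ tendsto_const_nhds
    filter_upwards [eventually_le_atBot (0:ℝ)] with t ht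
    have : t / δ ≤ 0 := div_nonpos_iff.2 (Or.inr ⟨ht, hδ.le⟩)
    simp only [unifCDF]
    rw [max_eq_left]
    exact (min_le_right _ _).trans this
  · refine Tendsto.congr' ?_ tendsto_const_nhds
    filter_upwards [eventually_ge_atTop δ] with t ht
    have h1 : (1:ℝ) ≤ t / δ := (one_le_div hδ).2 ht
    simp only [unifCDF]
    rw [min_eq_left h1, max_eq_right zero_le_one]

open MeasureTheory in
lemma unifCDF_ae_Icc {δ : ℝ} (hδ : 0 < δ) :
    ∀ᵐ y ∂((⟨unifCDF δ, (unifCDF_isCDF hδ).1, (unifCDF_isCDF hδ).2.1⟩ :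
        StieltjesFunction ℝ).measure), y ∈ Set.Icc 0 δ := by
  set s : StieltjesFunction ℝ := ⟨unifCDF δ, (unifCDF_isCDF hδ).1, (unifCDF_isCDF hδ).2.1⟩
  have h1 : s.measure (Set.Iio 0) = 0 := by
    refine le_antisymm ?_ (zero_le ..)
    refine le_trans (measure_mono Set.Iio_subset_Iic_self) ?_
    rw [StieltjesFunction.measure_Iic s (unifCDF_isCDF hδ).2.2.1]
    have : unifCDF δ 0 = 0 := by simp [unifCDF]
    simp only [show s 0 = 0 from this]
    simp
  have hprob : IsProbabilityMeasure s.measure := stj_prob (unifCDF_isCDF hδ)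
  have h2 : s.measure (Set.Ioi δ) = 0 := by
    have hδ1 : unifCDF δ δ = 1 := by simp [unifCDF, div_self hδ.ne']
    have hIic : s.measure (Set.Iic δ) = 1 := by
      rw [StieltjesFunction.measure_Iic s (unifCDF_isCDF hδ).2.2.1]
      simp only [show s δ = 1 from hδ1]
      simp
    rw [← Set.compl_Iic, measure_compl measurableSet_Iic (measure_ne_top _ _), hIic,
      measure_univ, tsub_self]
  rw [MeasureTheory.ae_iff]
  have hset : {y : ℝ | y ∉ Set.Icc 0 δ} = Set.Iio 0 ∪ Set.Ioi δ := by
    ext y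
    simp only [Set.mem_setOf_eq, Set.mem_Icc, not_and_or, not_le, Set.mem_union,
      Set.mem_Iio, Set.mem_Ioi]
  rw [hset]
  exact le_antisymm ((measure_union_le _ _).trans (by rw [h1, h2]; simp)) (zero_le ..)

open MeasureTheory in
lemma convCDF_le {K H : ℝ → ℝ} (hK : IsCDF K) (hH : IsCDF H) {δ : ℝ}
    (hae : ∀ᵐ y ∂((⟨H, hH.1, hH.2.1⟩ : StieltjesFunction ℝ).measure), y ∈ Set.Icc 0 δ)
    (x : ℝ) : convCDF K H hH x ≤ K x := by
  have := stj_prob hH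
  calc convCDF K H hH x ≤ ∫ _, K x ∂((⟨H, hH.1, hH.2.1⟩ : StieltjesFunction ℝ).measure) := by
        refine integral_mono_ae (cdf_integrable hK _ x) (integrable_const _) ?_
        filter_upwards [hae] with y hy
        exact hK.1 (by linarith [hy.1])
    _ = K x := by simp

open MeasureTheory in
lemma le_convCDF {K H : ℝ → ℝ} (hK : IsCDF K) (hH : IsCDF H) {δ : ℝ}
    (hae : ∀ᵐ y ∂((⟨H, hH.1, hH.2.1⟩ : StieltjesFunction ℝ).measure), y ∈ Set.Icc 0 δ)
    (x : ℝ) : K (x - δ) ≤ convCDF K H hH x := by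
  have := stj_prob hH
  calc K (x - δ) = ∫ _, K (x - δ) ∂((⟨H, hH.1, hH.2.1⟩ : StieltjesFunction ℝ).measure) := by simp
    _ ≤ convCDF K H hH x := by
        refine integral_mono_ae (integrable_const _) (cdf_integrable hK _ x) ?_
        filter_upwards [hae] with y hy
        exact hK.1 (by linarith [hy.2])

theorem bergstrom_sequential (F : ℕ → ℝ → ℝ) (hF : ∀ n, IsCDF (F n))
    (G : ℝ → ℝ) (hG : IsCDF G) :
    (∀ x : ℝ, ContinuousAt G x →
        Tendsto (fun n => F n x) atTop (nhds (G x))) ↔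
      ∀ H : ℝ → ℝ, (hH : IsCDF H) → Continuous H →
        Tendsto (fun n => ⨆ x : ℝ, |convCDF (F n) H hH x - convCDF G H hH x|)
          atTop (nhds 0) := by
  constructor
  · intro hconv H hH hHc
    exact polya (fun n => convCDF_mono (hF n) hH)
      (fun n x => convCDF_nonneg (hF n) hH x) (fun n x => convCDF_le_one (hF n) hH x)
      (convCDF_mono hG hH) (convCDF_continuous hG hH hHc)
      (convCDF_nonneg hG hH) (convCDF_le_one hG hH)
      (convCDF_atBot hG hH) (convCDF_atTop hG hH)
      (convCDF_tendsto_pt hF hG hH hHc hconv)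
  · intro hyp x hx
    rw [Metric.tendsto_atTop]
    intro ε hε
    obtain ⟨δ, hδpos, hδ⟩ := Metric.continuousAt_iff.1 hx (ε/2) (half_pos hε)
    have hδ'pos : 0 < δ/2 := half_pos hδpos
    set H : ℝ → ℝ := unifCDF (δ/2) with hHdef
    have hH : IsCDF H := unifCDF_isCDF hδ'pos
    have hae : ∀ᵐ y ∂((⟨H, hH.1, hH.2.1⟩ : StieltjesFunction ℝ).measure),
        y ∈ Set.Icc 0 (δ/2) := unifCDF_ae_Icc hδ'pos
    obtain ⟨N, hN⟩ := Metric.tendsto_atTop.1 (hyp H hH (unifCDF_cont _)) (ε/2) (half_pos hε)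
    refine ⟨N, fun n hn => ?_⟩
    set s := ⨆ t, |convCDF (F n) H hH t - convCDF G H hH t| with hsdef
    have hsn : s < ε/2 := by
      have h := hN n hn
      rw [Real.dist_eq, sub_zero] at h
      exact (le_abs_self _).trans_lt h
    have hbdd : BddAbove (Set.range fun t => |convCDF (F n) H hH t - convCDF G H hH t|) := by
      refine ⟨1, ?_⟩
      rintro _ ⟨t, rfl⟩
      rw [abs_le]
      constructor <;> nlinarith [convCDF_nonneg (hF n) hH t, convCDF_le_one (hF n) hH t,
        convCDF_nonneg hG hH t, convCDF_le_one hG hH t]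
    have hpt1 := abs_le.1 ((le_ciSup hbdd x).trans_eq hsdef.symm |>.trans le_rfl)
    have hpt2 := abs_le.1 ((le_ciSup hbdd (x + δ/2)).trans_eq hsdef.symm |>.trans le_rfl)
    have hA : convCDF (F n) H hH x ≤ F n x := convCDF_le (hF n) hH hae x
    have hB : G (x - δ/2) ≤ convCDF G H hH x := le_convCDF hG hH hae x
    have hC : F n x ≤ convCDF (F n) H hH (x + δ/2) := by
      have h := le_convCDF (hF n) hH hae (x + δ/2)
      rwa [add_sub_cancel_right] at h
    have hD : convCDF G H hH (x + δ/2) ≤ G (x + δ/2) := convCDF_le hG hH hae (x + δ/2)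
    have hG1 := abs_lt.1 (hδ (show dist (x - δ/2) x < δ by
      rw [Real.dist_eq]
      rw [show x - δ/2 - x = -(δ/2) by ring, abs_neg, abs_of_pos hδ'pos]
      linarith))
    have hG2 := abs_lt.1 (hδ (show dist (x + δ/2) x < δ by
      rw [Real.dist_eq]
      rw [show x + δ/2 - x = δ/2 by ring, abs_of_pos hδ'pos]
      linarith))
    rw [Real.dist_eq, abs_lt]
    constructor <;> linarith [hpt1.1, hpt1.2, hpt2.1, hpt2.2, hG1.1, hG1.2, hG2.1, hG2.2]
end
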